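/- arXiv:2204.02432 — 2 statements merged into one kernel-verified Lean document; each statement's English description precedes it below -/
import Mathlib

section
/- Triple robustness of the nonparametric estimator (section 3.1): in the setting of the product-error bias decomposition, the bias Bias_{τ_a}(P̃;P) := E[ μ̃ + (1{A=a}/π̃)·{ (R + S/η̃)·Y − μ̃ + (1−R)·(1 − S/η̃)·μ̃_S } ] − E[μ] equals zero if any one of the following holds almost everywhere: (i) μ̃_R = M_R, μ̃_S = M_S and γ̃ = Γ; (ii) μ̃_S = M_S and π̃ = π; or (iii) π̃ = π and η̃ = H. -/
open MeasureTheory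

/-!
Conditioning on `L`, the nuisances turn every observed product `1{A=a}·R·Y`, `1{A=a}·S·Y`,
`1{A=a}·S`, `1{A=a}·(1-R)`, `1{A=a}` into an explicit function of `L`, and the candidate
nuisances are `L`-measurable and bounded, so they pull out of the conditional expectation.
The integrand therefore has the same mean as an explicit function of `L`, which differs from
`μ` by the product error
`(π/π̃ - 1)(μ - μ̃) + (π/π̃)(1 - Γ)(H/η̃ - 1)(M_S - μ̃_S)`;
each of the three conditions kills both products.
-/

section CondExpCalculus

variable {Ω : Type*} {m m0 : MeasurableSpace Ω} {P : Measure Ω} {X X' G G' : Ω → ℝ}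

def HasCondExp (m : MeasurableSpace Ω) {m0 : MeasurableSpace Ω} (P : Measure[m0] Ω)
    (X G : Ω → ℝ) : Prop :=
  Integrable X P ∧ P[X | m] =ᵐ[P] G

namespace HasCondExp

theorem add (hX : HasCondExp m P X G) (hX' : HasCondExp m P X' G') :
    HasCondExp m P (fun ω => X ω + X' ω) (fun ω => G ω + G' ω) :=
  ⟨hX.1.add hX'.1, (condExp_add hX.1 hX'.1 m).trans (hX.2.add hX'.2)⟩

theorem sub (hX : HasCondExp m P X G) (hX' : HasCondExp m P X' G') :
    HasCondExp m P (fun ω => X ω - X' ω) (fun ω => G ω - G' ω) :=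
  ⟨hX.1.sub hX'.1, (condExp_sub hX.1 hX'.1 m).trans (hX.2.sub hX'.2)⟩

theorem mul_left [IsFiniteMeasure P] (hm : m ≤ m0) (hX : HasCondExp m P X G) {c : Ω → ℝ}
    (hc : Measurable[m] c) (hc_bdd : ∃ C, ∀ ω, |c ω| ≤ C) :
    HasCondExp m P (fun ω => c ω * X ω) (fun ω => c ω * G ω) := by
  obtain ⟨C, hC⟩ := hc_bdd
  have hC' : ∀ᵐ ω ∂P, ‖c ω‖ ≤ C := ae_of_all _ hC
  exact ⟨hX.1.bdd_mul (hc.mono hm le_rfl).aestronglyMeasurable hC',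
    (condExp_stronglyMeasurable_mul_of_bound hm hc.stronglyMeasurable hX.1 C hC').trans
      (Filter.EventuallyEq.rfl.mul hX.2)⟩

theorem of_measurable [IsFiniteMeasure P] (hm : m ≤ m0) (hX : Measurable[m] X)
    (hX_bdd : ∃ C, ∀ ω, |X ω| ≤ C) : HasCondExp m P X X := by
  obtain ⟨C, hC⟩ := hX_bdd
  have hX_int : Integrable X P :=
    .of_bound (hX.mono hm le_rfl).aestronglyMeasurable C (ae_of_all _ hC)
  exact ⟨hX_int, (condExp_of_stronglyMeasurable hm hX.stronglyMeasurable hX_int).eventuallyEq⟩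

theorem congr (h : HasCondExp m P X G) (hX : ∀ ω, X ω = X' ω) (hG : G =ᵐ[P] G') :
    HasCondExp m P X' G' :=
  ⟨h.1.congr (ae_of_all _ hX), (funext hX ▸ h.2).trans hG⟩

theorem integral_eq [IsFiniteMeasure P] (hm : m ≤ m0) (h : HasCondExp m P X G) :
    ∫ ω, X ω ∂P = ∫ ω, G ω ∂P :=
  (integral_condExp hm).symm.trans (integral_congr_ae h.2)

end HasCondExp

end CondExpCalculus

section Integrability

variable {Ω : Type*} [MeasurableSpace Ω] {P : Measure Ω} {X Y : Ω → ℝ}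

theorem abs_le_one_of_eq_zero_or_eq_one {x : ℝ} (h : x = 0 ∨ x = 1) : |x| ≤ 1 := by
  rcases h with rfl | rfl <;> simp

theorem integrable_of_eq_zero_or_eq_one [IsFiniteMeasure P] (hX : Measurable X)
    (hX01 : ∀ ω, X ω = 0 ∨ X ω = 1) : Integrable X P :=
  .of_bound hX.aestronglyMeasurable 1
    (ae_of_all _ fun ω => abs_le_one_of_eq_zero_or_eq_one (hX01 ω))

theorem MeasureTheory.Integrable.mul_of_eq_zero_or_eq_one (hY : Integrable Y P)
    (hX : Measurable X) (hX01 : ∀ ω, X ω = 0 ∨ X ω = 1) : Integrable (fun ω => X ω * Y ω) P :=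
  hY.bdd_mul hX.aestronglyMeasurable
    (ae_of_all _ fun ω => abs_le_one_of_eq_zero_or_eq_one (hX01 ω))

end Integrability

theorem exists_abs_one_div_le {Ω : Type*} {f : Ω → ℝ} {ε : ℝ} (hε : 0 < ε)
    (hf : ∀ ω, ε ≤ f ω) : ∃ C, ∀ ω, |1 / f ω| ≤ C :=
  ⟨1 / ε, fun ω => by
    rw [abs_of_pos (one_div_pos.2 (hε.trans_le (hf ω)))]
    exact one_div_le_one_div_of_le hε (hf ω)⟩

theorem exists_abs_convexComb_le {Ω : Type*} {γ f g : Ω → ℝ}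
    (hγ : ∀ ω, 0 ≤ γ ω ∧ γ ω ≤ 1) (hf : ∃ C, ∀ ω, |f ω| ≤ C) (hg : ∃ C, ∀ ω, |g ω| ≤ C) :
    ∃ C, ∀ ω, |γ ω * f ω + (1 - γ ω) * g ω| ≤ C := by
  obtain ⟨A, hA⟩ := hf
  obtain ⟨B, hB⟩ := hg
  refine ⟨A + B, fun ω => ?_⟩
  obtain ⟨hγ0, hγ1⟩ := hγ ω
  have hA0 := (abs_nonneg _).trans (hA ω)
  have hB0 := (abs_nonneg _).trans (hB ω)
  calc |γ ω * f ω + (1 - γ ω) * g ω|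
      ≤ γ ω * |f ω| + (1 - γ ω) * |g ω| := by
        refine (abs_add_le _ _).trans_eq ?_
        rw [abs_mul, abs_mul, abs_of_nonneg hγ0, abs_of_nonneg (sub_nonneg.2 hγ1)]
    _ ≤ A + B := by nlinarith [hA ω, hB ω]

section Estimator

variable {Ω : Type*} {m m0 : MeasurableSpace Ω} {P : Measure Ω}
  {I R S Y π Γ H M_R M_S : Ω → ℝ}

theorem hasCondExp_observed_terms [IsFiniteMeasure P]
    (hI : Measurable I) (hR : Measurable R) (hS : Measurable S) (hY : Integrable Y P)
    (hI01 : ∀ ω, I ω = 0 ∨ I ω = 1) (hR01 : ∀ ω, R ω = 0 ∨ R ω = 1)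
    (hS01 : ∀ ω, S ω = 0 ∨ S ω = 1)
    (hπ : P[I | m] =ᵐ[P] π)
    (hΓ : P[fun ω => I ω * R ω | m] =ᵐ[P] fun ω => Γ ω * π ω)
    (hH : P[fun ω => I ω * S ω | m]
      =ᵐ[P] fun ω => H ω * (P[fun ω' => I ω' * (1 - R ω') | m]) ω)
    (hMR : P[fun ω => I ω * R ω * Y ω | m] =ᵐ[P] fun ω => M_R ω * (Γ ω * π ω))
    (hMS : P[fun ω => I ω * S ω * Y ω | m]
      =ᵐ[P] fun ω => M_S ω * (H ω * ((1 - Γ ω) * π ω))) :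
    HasCondExp m P I π ∧
    HasCondExp m P (fun ω => I ω * (1 - R ω)) (fun ω => (1 - Γ ω) * π ω) ∧
    HasCondExp m P (fun ω => I ω * S ω) (fun ω => H ω * ((1 - Γ ω) * π ω)) ∧
    HasCondExp m P (fun ω => I ω * R ω * Y ω) (fun ω => M_R ω * (Γ ω * π ω)) ∧
    HasCondExp m P (fun ω => I ω * S ω * Y ω)
      (fun ω => M_S ω * (H ω * ((1 - Γ ω) * π ω))) := by
  have hIR01 : ∀ ω, I ω * R ω = 0 ∨ I ω * R ω = 1 := fun ω => by
    rcases hI01 ω with h | h <;> rcases hR01 ω with h' | h' <;> simp [h, h']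
  have hIS01 : ∀ ω, I ω * S ω = 0 ∨ I ω * S ω = 1 := fun ω => by
    rcases hI01 ω with h | h <;> rcases hS01 ω with h' | h' <;> simp [h, h']
  have h_I : HasCondExp m P I π := ⟨integrable_of_eq_zero_or_eq_one hI hI01, hπ⟩
  have h_IR : HasCondExp m P (fun ω => I ω * R ω) (fun ω => Γ ω * π ω) :=
    ⟨integrable_of_eq_zero_or_eq_one (hI.mul hR) hIR01, hΓ⟩
  have h_I1R := (h_I.sub h_IR).congr (fun ω => (mul_one_sub _ _).symm)
    (ae_of_all _ fun ω => (one_sub_mul _ _).symm)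
  refine ⟨h_I, h_I1R, ⟨integrable_of_eq_zero_or_eq_one (hI.mul hS) hIS01, ?_⟩,
    ⟨hY.mul_of_eq_zero_or_eq_one (hI.mul hR) hIR01, hMR⟩,
    ⟨hY.mul_of_eq_zero_or_eq_one (hI.mul hS) hIS01, hMS⟩⟩
  filter_upwards [hH, h_I1R.2] with ω hHω h_I1Rω
  rw [hHω, h_I1Rω]

theorem hasCondExp_ipw_integrand [IsFiniteMeasure P] (hm : m ≤ m0)
    {πt ηt μt μtS gI gI1R gIS gIRY gISY : Ω → ℝ}
    (h_I : HasCondExp m P I gI) (h_I1R : HasCondExp m P (fun ω => I ω * (1 - R ω)) gI1R)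
    (h_IS : HasCondExp m P (fun ω => I ω * S ω) gIS)
    (h_IRY : HasCondExp m P (fun ω => I ω * R ω * Y ω) gIRY)
    (h_ISY : HasCondExp m P (fun ω => I ω * S ω * Y ω) gISY)
    (hSR : ∀ ω, S ω * R ω = 0)
    (hπt : Measurable[m] πt) (hπt_bdd : ∃ C, ∀ ω, |1 / πt ω| ≤ C)
    (hηt : Measurable[m] ηt) (hηt_bdd : ∃ C, ∀ ω, |1 / ηt ω| ≤ C)
    (hμt : Measurable[m] μt) (hμt_bdd : ∃ C, ∀ ω, |μt ω| ≤ C)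
    (hμtS : Measurable[m] μtS) (hμtS_bdd : ∃ C, ∀ ω, |μtS ω| ≤ C) :
    HasCondExp m P
      (fun ω => μt ω + (I ω / πt ω) *
        ((R ω + S ω / ηt ω) * Y ω - μt ω + (1 - R ω) * (1 - S ω / ηt ω) * μtS ω))
      (fun ω => μt ω + 1 / πt ω *
        (gIRY ω + 1 / ηt ω * (gISY ω - μtS ω * gIS ω) + μtS ω * gI1R ω - μt ω * gI ω)) := by
  have h_IW := ((h_IRY.add ((h_ISY.sub (h_IS.mul_left hm hμtS hμtS_bdd)).mul_left hm
    (hηt.const_div 1) hηt_bdd)).add (h_I1R.mul_left hm hμtS hμtS_bdd)).sub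
    (h_I.mul_left hm hμt hμt_bdd)
  refine ((HasCondExp.of_measurable hm hμt hμt_bdd).add
    (h_IW.mul_left hm (hπt.const_div 1) hπt_bdd)).congr (fun ω => ?_) .rfl
  -- `(1 - R) * S = S` because `S * R = 0`
  linear_combination (-(I ω * μtS ω) / (πt ω * ηt ω)) * hSR ω

end Estimator

theorem ipwMean_sub_eq_productError (π Γ H M_R M_S πt ηt μt μtS : ℝ) :
    μt + 1 / πt * (M_R * (Γ * π)
        + 1 / ηt * (M_S * (H * ((1 - Γ) * π)) - μtS * (H * ((1 - Γ) * π)))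
        + μtS * ((1 - Γ) * π) - μt * π) - (Γ * M_R + (1 - Γ) * M_S)
      = (π / πt - 1) * (Γ * M_R + (1 - Γ) * M_S - μt)
        + π / πt * (1 - Γ) * (H / ηt - 1) * (M_S - μtS) := by
  ring

theorem productError_ae_eq_zero {Ω : Type*} {mΩ : MeasurableSpace Ω} {P : Measure Ω}
    {π Γ H M_R M_S πt ηt γt μt μtR μtS : Ω → ℝ}
    (hπt : ∀ ω, πt ω ≠ 0) (hηt : ∀ ω, ηt ω ≠ 0)
    (hμt : ∀ ω, μt ω = γt ω * μtR ω + (1 - γt ω) * μtS ω)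
    (hrob : (μtR =ᵐ[P] M_R ∧ μtS =ᵐ[P] M_S ∧ γt =ᵐ[P] Γ)
      ∨ (μtS =ᵐ[P] M_S ∧ πt =ᵐ[P] π)
      ∨ (πt =ᵐ[P] π ∧ ηt =ᵐ[P] H)) :
    ∀ᵐ ω ∂P, (π ω / πt ω - 1) * (Γ ω * M_R ω + (1 - Γ ω) * M_S ω - μt ω)
      + π ω / πt ω * (1 - Γ ω) * (H ω / ηt ω - 1) * (M_S ω - μtS ω) = 0 := by
  rcases hrob with ⟨hR, hS, hγ⟩ | ⟨hS, hπ⟩ | ⟨hπ, hη⟩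
  · filter_upwards [hR, hS, hγ] with ω hRω hSω hγω
    rw [hμt ω, hRω, hSω, hγω]
    ring
  · filter_upwards [hS, hπ] with ω hSω hπω
    rw [hSω, ← hπω, div_self (hπt ω)]
    ring
  · filter_upwards [hπ, hη] with ω hπω hηω
    rw [← hπω, ← hηω, div_self (hπt ω), div_self (hηt ω)]
    ring

/-- Triple robustness of the nonparametric estimator (section 3.1): the bias
`Bias_{τ_a}(P̃;P)` vanishes if (i) `μ̃_R = M_R`, `μ̃_S = M_S`, `γ̃ = Γ` a.e.; or
(ii) `μ̃_S = M_S`, `π̃ = π` a.e.; or (iii) `π̃ = π`, `η̃ = H` a.e. -/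
theorem triple_robustness_tau
    {Ω : Type*} [MeasurableSpace Ω] (P : Measure Ω) [IsProbabilityMeasure P]
    {d : ℕ} (L : Ω → (Fin d → ℝ)) (A R S Y : Ω → ℝ)
    (hL : Measurable L) (hA : Measurable A) (hR : Measurable R)
    (hS : Measurable S) (hY : Integrable Y P)
    (hA01 : ∀ ω, A ω = 0 ∨ A ω = 1)
    (hR01 : ∀ ω, R ω = 0 ∨ R ω = 1)
    (hS01 : ∀ ω, S ω = 0 ∨ S ω = 1)
    (hSR : ∀ ω, S ω * R ω = 0)
    (a : ℝ) (ha : a = 0 ∨ a = 1)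
    (𝓛 : MeasurableSpace Ω) (h𝓛 : 𝓛 = MeasurableSpace.comap L inferInstance)
    (ind : Ω → ℝ) (hind : ind = fun ω => if A ω = a then (1:ℝ) else 0)
    -- arm-a nuisance random variables
    (π Γ H M_R M_S : Ω → ℝ)
    (hπ_meas : Measurable[𝓛] π) (hπ_int : Integrable π P)
    (hΓ_meas : Measurable[𝓛] Γ) (hΓ_int : Integrable Γ P)
    (hH_meas : Measurable[𝓛] H) (hH_int : Integrable H P)
    (hMR_meas : Measurable[𝓛] M_R) (hMR_int : Integrable M_R P)
    (hMS_meas : Measurable[𝓛] M_S) (hMS_int : Integrable M_S P)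
    (hπ01 : ∀ ω, 0 ≤ π ω ∧ π ω ≤ 1)
    (hΓ01 : ∀ ω, 0 ≤ Γ ω ∧ Γ ω ≤ 1)
    (hH01 : ∀ ω, 0 ≤ H ω ∧ H ω ≤ 1)
    -- characterizations
    (hπ : P[ind | 𝓛] =ᵐ[P] π)
    (hΓ : P[fun ω => ind ω * R ω | 𝓛] =ᵐ[P] fun ω => Γ ω * π ω)
    (hH : P[fun ω => ind ω * S ω | 𝓛]
      =ᵐ[P] fun ω => H ω * (P[fun ω' => ind ω' * (1 - R ω') | 𝓛]) ω)
    (hMR : P[fun ω => ind ω * R ω * Y ω | 𝓛] =ᵐ[P] fun ω => M_R ω * (Γ ω * π ω))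
    (hMS : P[fun ω => ind ω * S ω * Y ω | 𝓛]
      =ᵐ[P] fun ω => M_S ω * (H ω * ((1 - Γ ω) * π ω)))
    -- true outcome regression μ
    (μ : Ω → ℝ) (hμdef : μ = fun ω => Γ ω * M_R ω + (1 - Γ ω) * M_S ω)
    -- positivity of true nuisances
    (ε : ℝ) (hε : 0 < ε)
    (hπpos : ∀ᵐ ω ∂P, ε ≤ π ω)
    (hHpos : ∀ᵐ ω ∂P, ε ≤ H ω)
    -- candidate (possibly misspecified) nuisances
    (πt ηt γt μtR μtS : Ω → ℝ)
    (hπt_meas : Measurable[𝓛] πt) (hηt_meas : Measurable[𝓛] ηt)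
    (hγt_meas : Measurable[𝓛] γt) (hμtR_meas : Measurable[𝓛] μtR)
    (hμtS_meas : Measurable[𝓛] μtS)
    (hπt_bdd : ∃ B, ∀ ω, |πt ω| ≤ B) (hηt_bdd : ∃ B, ∀ ω, |ηt ω| ≤ B)
    (hμtR_bdd : ∃ B, ∀ ω, |μtR ω| ≤ B) (hμtS_bdd : ∃ B, ∀ ω, |μtS ω| ≤ B)
    (hπt_pos : ∀ ω, ε ≤ πt ω) (hηt_pos : ∀ ω, ε ≤ ηt ω)
    (hγt01 : ∀ ω, 0 ≤ γt ω ∧ γt ω ≤ 1)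
    (μt : Ω → ℝ) (hμtdef : μt = fun ω => γt ω * μtR ω + (1 - γt ω) * μtS ω)
    -- any one of the three robustness conditions
    (hrob : (μtR =ᵐ[P] M_R ∧ μtS =ᵐ[P] M_S ∧ γt =ᵐ[P] Γ)
      ∨ (μtS =ᵐ[P] M_S ∧ πt =ᵐ[P] π)
      ∨ (πt =ᵐ[P] π ∧ ηt =ᵐ[P] H)) :
    ∫ ω, (μt ω + (ind ω / πt ω) *
        ((R ω + S ω / ηt ω) * Y ω - μt ω
          + (1 - R ω) * (1 - S ω / ηt ω) * μtS ω)) ∂P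
      - ∫ ω, μ ω ∂P = 0 := by
  -- name the ambient σ-algebra, which `𝓛` shadows in instance search
  rename_i mΩ _
  have hm : 𝓛 ≤ mΩ := h𝓛 ▸ hL.comap_le
  have hind_meas : Measurable[mΩ] ind :=
    hind ▸ Measurable.ite (hA (measurableSet_singleton a)) measurable_const measurable_const
  have hind01 : ∀ ω, ind ω = 0 ∨ ind ω = 1 := fun ω => by
    simp only [hind]
    split_ifs <;> simp
  obtain ⟨h_ind, h_ind1R, h_indS, h_indRY, h_indSY⟩ := hasCondExp_observed_terms
    hind_meas hR hS hY hind01 hR01 hS01 hπ hΓ hH hMR hMS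
  have hμt_meas : Measurable[𝓛] μt :=
    hμtdef ▸ (hγt_meas.mul hμtR_meas).add ((measurable_const.sub hγt_meas).mul hμtS_meas)
  have hX := hasCondExp_ipw_integrand hm h_ind h_ind1R h_indS h_indRY h_indSY hSR
    hπt_meas (exists_abs_one_div_le hε hπt_pos) hηt_meas (exists_abs_one_div_le hε hηt_pos)
    hμt_meas (hμtdef ▸ exists_abs_convexComb_le hγt01 hμtR_bdd hμtS_bdd) hμtS_meas hμtS_bdd
  rw [hX.integral_eq hm, sub_eq_zero]
  refine integral_congr_ae ?_
  have hπt0 : ∀ ω, πt ω ≠ 0 := fun ω => (hε.trans_le (hπt_pos ω)).ne'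
  have hηt0 : ∀ ω, ηt ω ≠ 0 := fun ω => (hε.trans_le (hηt_pos ω)).ne'
  filter_upwards [productError_ae_eq_zero hπt0 hηt0 (congrFun hμtdef) hrob] with ω hω
  rw [hμdef]
  linear_combination ipwMean_sub_eq_productError (π ω) (Γ ω) (H ω) (M_R ω) (M_S ω)
    (πt ω) (ηt ω) (μt ω) (μtS ω) + hω
end

section
/- Discrepancy between the MAR functional and the nonparametric functional (section 3.2 / Appendix B): assume π > 0 and Γ + (1−Γ)·H > 0 almost surely. Then almost everywhere on {π > 0}, M_MAR − μ = Γ·(1−Γ)·(1−H)·(M_R − M_S) / (1 − (1−Γ)·(1−H)); consequently, if μ and M_MAR are integrable, τ_a*(P) − τ_a(P) = E[ Γ·(1−Γ)·(1−H)·(M_R − M_S) / (1 − (1−Γ)·(1−H)) ], where τ_a*(P) := E[M_MAR] and τ_a(P) := E[μ]. -/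
/-!
By linearity of conditional expectation, `E[1{A=a}(R+S)Y | L] = M_R Γπ + M_S H(1-Γ)π`
and, since `E[1{A=a}(1-R) | L] = (1-Γ)π`, also `E[1{A=a}(R+S) | L] = Γπ + H(1-Γ)π`. So where
`π > 0`, `M_MAR` is the mean of `M_R` and `M_S` with weights `Γ` and `H(1-Γ)`, whereas `μ` uses
the weights `Γ` and `1-Γ`; the difference of the two means is the stated fraction, whose
denominator equals `Γ + (1-Γ)H > 0`. Integrating gives the second claim.
-/

open MeasureTheory

lemma zero_or_one_mul {M₀ : Type*} [MulZeroOneClass M₀] {x y : M₀} (hx : x = 0 ∨ x = 1)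
    (hy : y = 0 ∨ y = 1) : x * y = 0 ∨ x * y = 1 := by
  rcases hx with rfl | rfl <;> simp [hy]

namespace MeasureTheory

variable {Ω : Type*} {m₀ : MeasurableSpace Ω} {P : Measure Ω} {f g : Ω → ℝ}

lemma integrable_of_zero_or_one [IsFiniteMeasure P] (hf : AEStronglyMeasurable f P)
    (hf01 : ∀ ω, f ω = 0 ∨ f ω = 1) : Integrable f P :=
  .of_bound hf 1 <| ae_of_all _ fun ω => by rcases hf01 ω with h | h <;> simp [h]

lemma Integrable.zero_or_one_mul (hg : Integrable g P) (hf : AEStronglyMeasurable f P)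
    (hf01 : ∀ ω, f ω = 0 ∨ f ω = 1) : Integrable (fun ω => f ω * g ω) P :=
  hg.bdd_mul hf (c := 1) <| ae_of_all _ fun ω => by rcases hf01 ω with h | h <;> simp [h]

end MeasureTheory

lemma ae_MAR_mul_weight_eq {Ω : Type*} {m m₀ : MeasurableSpace Ω} {P : Measure Ω}
    [IsFiniteMeasure P] {ind R S Y π Γ H M_R M_S M_MAR : Ω → ℝ}
    (hind : AEStronglyMeasurable ind P) (hind01 : ∀ ω, ind ω = 0 ∨ ind ω = 1)
    (hR : AEStronglyMeasurable R P) (hR01 : ∀ ω, R ω = 0 ∨ R ω = 1)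
    (hS : AEStronglyMeasurable S P) (hS01 : ∀ ω, S ω = 0 ∨ S ω = 1)
    (hY : Integrable Y P)
    (hπ : P[ind | m] =ᵐ[P] π)
    (hΓ : P[fun ω => ind ω * R ω | m] =ᵐ[P] fun ω => Γ ω * π ω)
    (hH : P[fun ω => ind ω * S ω | m]
      =ᵐ[P] fun ω => H ω * (P[fun ω' => ind ω' * (1 - R ω') | m]) ω)
    (hMR : P[fun ω => ind ω * R ω * Y ω | m] =ᵐ[P] fun ω => M_R ω * (Γ ω * π ω))
    (hMS : P[fun ω => ind ω * S ω * Y ω | m]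
      =ᵐ[P] fun ω => M_S ω * (H ω * ((1 - Γ ω) * π ω)))
    (hMMAR : P[fun ω => ind ω * (R ω + S ω) * Y ω | m]
      =ᵐ[P] fun ω => M_MAR ω * (P[fun ω' => ind ω' * (R ω' + S ω') | m]) ω) :
    ∀ᵐ ω ∂P, M_MAR ω * (Γ ω * π ω + H ω * ((1 - Γ ω) * π ω))
      = M_R ω * (Γ ω * π ω) + M_S ω * (H ω * ((1 - Γ ω) * π ω)) := by
  have hiR01 := fun ω => zero_or_one_mul (hind01 ω) (hR01 ω)
  have hiS01 := fun ω => zero_or_one_mul (hind01 ω) (hS01 ω)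
  have hi : Integrable ind P := integrable_of_zero_or_one hind hind01
  have hiR : Integrable (fun ω => ind ω * R ω) P := integrable_of_zero_or_one (hind.mul hR) hiR01
  have hiS : Integrable (fun ω => ind ω * S ω) P := integrable_of_zero_or_one (hind.mul hS) hiS01
  have hiRY : Integrable (fun ω => ind ω * R ω * Y ω) P :=
    hY.zero_or_one_mul (hind.mul hR) hiR01
  have hiSY : Integrable (fun ω => ind ω * S ω * Y ω) P :=
    hY.zero_or_one_mul (hind.mul hS) hiS01
  have hRSY : P[fun ω => ind ω * (R ω + S ω) * Y ω | m]
      =ᵐ[P] P[fun ω => ind ω * R ω * Y ω | m] + P[fun ω => ind ω * S ω * Y ω | m] := by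
    convert condExp_add hiRY hiSY m using 2
    ext ω
    simp only [Pi.add_apply]
    ring
  have hRS : P[fun ω => ind ω * (R ω + S ω) | m]
      =ᵐ[P] P[fun ω => ind ω * R ω | m] + P[fun ω => ind ω * S ω | m] := by
    convert condExp_add hiR hiS m using 2
    ext ω
    simp only [Pi.add_apply]
    ring
  have hNotR : P[fun ω => ind ω * (1 - R ω) | m]
      =ᵐ[P] P[ind | m] - P[fun ω => ind ω * R ω | m] := by
    convert condExp_sub hi hiR m using 2
    ext ω
    simp only [Pi.sub_apply]
    ring
  filter_upwards [hMMAR, hRSY, hRS, hNotR, hπ, hΓ, hH, hMR, hMS]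
    with ω hMMAR hRSY hRS hNotR hπ hΓ hH hMR hMS
  simp only [Pi.add_apply, Pi.sub_apply] at hRSY hRS hNotR
  rw [hRSY, hRS, hMR, hMS, hΓ, hH, hNotR, hπ, hΓ] at hMMAR
  linear_combination -hMMAR

lemma sub_convex_comb_eq_div_of_mul_eq {g h p mR mS mMAR : ℝ} (hp : p ≠ 0)
    (hD : g + (1 - g) * h ≠ 0)
    (hw : mMAR * (g * p + h * ((1 - g) * p)) = mR * (g * p) + mS * (h * ((1 - g) * p))) :
    mMAR - (g * mR + (1 - g) * mS)
      = g * (1 - g) * (1 - h) * (mR - mS) / (1 - (1 - g) * (1 - h)) := by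
  have hw' : mMAR * (g + (1 - g) * h) = mR * g + mS * (h * (1 - g)) :=
    mul_right_cancel₀ hp (by linear_combination hw)
  rw [show 1 - (1 - g) * (1 - h) = g + (1 - g) * h by ring, eq_div_iff hD]
  linear_combination hw'

/-- Discrepancy between the MAR functional and the nonparametric functional
(section 3.2 / Appendix B): if `π > 0` and `Γ + (1−Γ)H > 0` a.s., then a.e. on
`{π > 0}`, `M_MAR − μ = Γ(1−Γ)(1−H)(M_R − M_S)/(1 − (1−Γ)(1−H))`; consequently
`τ_a*(P) − τ_a(P) = E[Γ(1−Γ)(1−H)(M_R − M_S)/(1 − (1−Γ)(1−H))]`. -/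
theorem MAR_discrepancy_formula
    {Ω : Type*} [MeasurableSpace Ω] (P : Measure Ω) [IsProbabilityMeasure P]
    {d : ℕ} (L : Ω → (Fin d → ℝ)) (A R S Y : Ω → ℝ)
    (hL : Measurable L) (hA : Measurable A) (hR : Measurable R)
    (hS : Measurable S) (hY : Integrable Y P)
    (hA01 : ∀ ω, A ω = 0 ∨ A ω = 1)
    (hR01 : ∀ ω, R ω = 0 ∨ R ω = 1)
    (hS01 : ∀ ω, S ω = 0 ∨ S ω = 1)
    (hSR : ∀ ω, S ω * R ω = 0)
    (a : ℝ) (ha : a = 0 ∨ a = 1)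
    (𝓛 : MeasurableSpace Ω) (h𝓛 : 𝓛 = MeasurableSpace.comap L inferInstance)
    (ind : Ω → ℝ) (hind : ind = fun ω => if A ω = a then (1:ℝ) else 0)
    -- arm-a nuisance random variables
    (π Γ H M_R M_S M_MAR : Ω → ℝ)
    (hπ_meas : Measurable[𝓛] π) (hπ_int : Integrable π P)
    (hΓ_meas : Measurable[𝓛] Γ) (hΓ_int : Integrable Γ P)
    (hH_meas : Measurable[𝓛] H) (hH_int : Integrable H P)
    (hMR_meas : Measurable[𝓛] M_R) (hMR_int : Integrable M_R P)
    (hMS_meas : Measurable[𝓛] M_S) (hMS_int : Integrable M_S P)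
    (hMMAR_meas : Measurable[𝓛] M_MAR) (hMMAR_int : Integrable M_MAR P)
    (hπ01 : ∀ ω, 0 ≤ π ω ∧ π ω ≤ 1)
    (hΓ01 : ∀ ω, 0 ≤ Γ ω ∧ Γ ω ≤ 1)
    (hH01 : ∀ ω, 0 ≤ H ω ∧ H ω ≤ 1)
    -- characterizations
    (hπ : P[ind | 𝓛] =ᵐ[P] π)
    (hΓ : P[fun ω => ind ω * R ω | 𝓛] =ᵐ[P] fun ω => Γ ω * π ω)
    (hH : P[fun ω => ind ω * S ω | 𝓛]
      =ᵐ[P] fun ω => H ω * (P[fun ω' => ind ω' * (1 - R ω') | 𝓛]) ω)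
    (hMR : P[fun ω => ind ω * R ω * Y ω | 𝓛] =ᵐ[P] fun ω => M_R ω * (Γ ω * π ω))
    (hMS : P[fun ω => ind ω * S ω * Y ω | 𝓛]
      =ᵐ[P] fun ω => M_S ω * (H ω * ((1 - Γ ω) * π ω)))
    (hMMAR : P[fun ω => ind ω * (R ω + S ω) * Y ω | 𝓛]
      =ᵐ[P] fun ω => M_MAR ω * (P[fun ω' => ind ω' * (R ω' + S ω') | 𝓛]) ω)
    -- definition of μ, positivity and integrability
    (μ : Ω → ℝ) (hμdef : μ = fun ω => Γ ω * M_R ω + (1 - Γ ω) * M_S ω)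
    (hπpos : ∀ᵐ ω ∂P, 0 < π ω)
    (hDpos : ∀ᵐ ω ∂P, 0 < Γ ω + (1 - Γ ω) * H ω)
    (hμ_int : Integrable μ P) :
    (∀ᵐ ω ∂P, 0 < π ω →
        M_MAR ω - μ ω
          = Γ ω * (1 - Γ ω) * (1 - H ω) * (M_R ω - M_S ω)
            / (1 - (1 - Γ ω) * (1 - H ω)))
    ∧ ∫ ω, M_MAR ω ∂P - ∫ ω, μ ω ∂P
        = ∫ ω, Γ ω * (1 - Γ ω) * (1 - H ω) * (M_R ω - M_S ω)
            / (1 - (1 - Γ ω) * (1 - H ω)) ∂P := by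
  subst hμdef
  -- built from `hA`, so that the ambient σ-algebra and not the local instance `𝓛` is used
  have hind_meas := hind ▸ (StronglyMeasurable.ite (hA (measurableSet_singleton a))
    (stronglyMeasurable_const (b := (1 : ℝ))) stronglyMeasurable_const).aestronglyMeasurable
      (μ := P)
  have hind01 : ∀ ω, ind ω = 0 ∨ ind ω = 1 := by
    intro ω
    simp only [hind]
    split_ifs <;> simp
  have hweights := ae_MAR_mul_weight_eq hind_meas hind01 hR.aestronglyMeasurable hR01
    hS.aestronglyMeasurable hS01 hY hπ hΓ hH hMR hMS hMMAR
  have hpointwise : ∀ᵐ ω ∂P, 0 < π ω → M_MAR ω - (Γ ω * M_R ω + (1 - Γ ω) * M_S ω)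
      = Γ ω * (1 - Γ ω) * (1 - H ω) * (M_R ω - M_S ω) / (1 - (1 - Γ ω) * (1 - H ω)) := by
    filter_upwards [hweights, hDpos] with ω hw hD hp
    exact sub_convex_comb_eq_div_of_mul_eq hp.ne' hD.ne' hw
  refine ⟨hpointwise, ?_⟩
  rw [← integral_sub hMMAR_int hμ_int]
  exact integral_congr_ae <| by filter_upwards [hpointwise, hπpos] with ω h hp using h hp
end
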